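/- arXiv:1008.1498 — 3 statements merged into one kernel-verified Lean document; each statement's English description precedes it below -/
import Mathlib

section
/- (Fuchs) Let D be an m×n real matrix, v ∈ ℝⁿ, and s = Dv, and suppose ||v||₀ is minimal among all solutions of Dw = s (i.e., ||v||₀ ≤ ||w||₀ for all w with Dw = s). Let S = supp(v), let D₀ be the submatrix of D consisting of the columns indexed by S, let D₁ consist of the remaining columns, and let v₀ be the vector of nonzero coordinates of v. If there exists a vector h ∈ ℝᵐ with D₀ᵀh = sgn(v₀) and ||D₁ᵀh||_∞ < 1, then ||v||₁ < ||w||₁ for every vector w ≠ v with Dw = s. -/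
open Matrix
open scoped Classical

/-- Number of nonzero entries of a vector (the ℓ₀ quasi-norm). -/
noncomputable def l0 {n : ℕ} (x : Fin n → ℝ) : ℕ :=
  Finset.card (Finset.univ.filter fun i => x i ≠ 0)

/-!
The certificate `c = Dᵀ h` has `|c j| ≤ 1` everywhere and `c ⬝ᵥ v = ‖v‖₁`. For any solution `w`,
`c ⬝ᵥ w = h ⬝ᵥ D w = h ⬝ᵥ D v = ‖v‖₁`, while `c ⬝ᵥ w ≤ ‖w‖₁`, strictly as soon as `w` has a
nonzero entry off `supp v`, where `|c j| < 1`. Otherwise `supp w ⊆ supp v`, and walking from `v`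
along the line through `w` until a coordinate of `v` vanishes gives a solution strictly sparser
than `v`, contradicting the minimality of `‖v‖₀`.
-/

namespace Real

theorem sign_mul_self_eq_abs (r : ℝ) : sign r * r = |r| := by
  rcases lt_trichotomy r 0 with hr | rfl | hr
  · rw [sign_of_neg hr, abs_of_neg hr, neg_one_mul]
  · simp
  · rw [sign_of_pos hr, abs_of_pos hr, one_mul]

theorem abs_sign_le_one (r : ℝ) : |sign r| ≤ 1 := by
  rcases sign_apply_eq r with h | h | h <;> simp [h]

end Real

theorem mul_le_abs_of_abs_le_one {c x : ℝ} (hc : |c| ≤ 1) : c * x ≤ |x| :=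
  (le_abs_self _).trans ((abs_mul c x).trans_le (mul_le_of_le_one_left (abs_nonneg x) hc))

theorem mul_lt_abs_of_abs_lt_one {c x : ℝ} (hc : |c| < 1) (hx : x ≠ 0) : c * x < |x| :=
  (le_abs_self _).trans_lt ((abs_mul c x).trans_lt (mul_lt_of_lt_one_left (abs_pos.2 hx) hc))

section DualCertificate

variable {ι : Type*} [Fintype ι]

theorem dotProduct_lt_sum_abs {c w : ι → ℝ} (hc : ∀ j, |c j| ≤ 1) {j₀ : ι}
    (hcj₀ : |c j₀| < 1) (hwj₀ : w j₀ ≠ 0) : c ⬝ᵥ w < ∑ j, |w j| :=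
  Finset.sum_lt_sum (fun j _ => mul_le_abs_of_abs_le_one (hc j))
    ⟨j₀, Finset.mem_univ _, mul_lt_abs_of_abs_lt_one hcj₀ hwj₀⟩

theorem dotProduct_eq_sum_abs_of_eq_sign {c v : ι → ℝ}
    (hc : ∀ j, v j ≠ 0 → c j = Real.sign (v j)) : c ⬝ᵥ v = ∑ j, |v j| :=
  Finset.sum_congr rfl fun j _ => by
    by_cases hv : v j = 0
    · simp [hv]
    · rw [hc j hv, Real.sign_mul_self_eq_abs]

end DualCertificate

theorem exists_support_ssubset_of_support_subset {ι : Type*} {v w : ι → ℝ} (hne : w ≠ v)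
    (hwv : Function.support w ⊆ Function.support v) :
    ∃ t : ℝ, Function.support (v + t • (w - v)) ⊂ Function.support v := by
  have hzero : ∀ j, v j = 0 → w j = 0 := fun j hv =>
    Function.notMem_support.1 (mt (@hwv j) (Function.notMem_support.2 hv))
  obtain ⟨j₀, hj₀⟩ := Function.ne_iff.1 hne
  have hvj₀ : v j₀ ≠ 0 := fun hv => hj₀ (by rw [hzero j₀ hv, hv])
  refine ⟨-v j₀ / (w j₀ - v j₀), ?_, fun hsub => ?_⟩
  · intro j hj hv
    apply hj
    simp [hzero j hv, hv]
  · refine hsub hvj₀ ?_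
    simp only [Pi.add_apply, Pi.smul_apply, Pi.sub_apply, smul_eq_mul]
    field_simp [sub_ne_zero.2 hj₀]
    ring

theorem l0_lt_l0_of_support_ssubset {n : ℕ} {x y : Fin n → ℝ}
    (h : Function.support x ⊂ Function.support y) : l0 x < l0 y := by
  refine Finset.card_lt_card (Finset.coe_ssubset.1 ?_)
  simpa [Function.support] using h

/-- (Fuchs) Let `s = D v` with `‖v‖₀` minimal among solutions of `D w = s`.
If there is a vector `h` with `D₀ᵀ h = sgn v₀` (on the support of `v`) and
`‖D₁ᵀ h‖_∞ < 1` (off the support of `v`), then `v` is the unique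
`ℓ₁`-minimizer among solutions of `D w = s`. -/
theorem fuchs_l1_recovery (m n : ℕ) (D : Matrix (Fin m) (Fin n) ℝ)
    (v : Fin n → ℝ) (s : Fin m → ℝ) (hs : s = D.mulVec v)
    (hmin : ∀ w : Fin n → ℝ, D.mulVec w = s → l0 v ≤ l0 w)
    (h : Fin m → ℝ)
    (hsupp : ∀ j : Fin n, v j ≠ 0 → Dᵀ.mulVec h j = Real.sign (v j))
    (hoff : ∀ j : Fin n, v j = 0 → |Dᵀ.mulVec h j| < 1) :
    ∀ w : Fin n → ℝ, D.mulVec w = s → w ≠ v →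
      ∑ j, |v j| < ∑ j, |w j| := by
  intro w hw hne
  have hc : ∀ j, |(Dᵀ *ᵥ h) j| ≤ 1 := fun j => by
    by_cases hv : v j = 0
    · exact (hoff j hv).le
    · exact hsupp j hv ▸ Real.abs_sign_le_one _
  have hcw : (Dᵀ *ᵥ h) ⬝ᵥ w = ∑ j, |v j| := by
    rw [← dotProduct_eq_sum_abs_of_eq_sign hsupp, mulVec_transpose, ← dotProduct_mulVec,
      ← dotProduct_mulVec, hw, hs]
  by_cases hwv : Function.support w ⊆ Function.support v
  · obtain ⟨t, ht⟩ := exists_support_ssubset_of_support_subset hne hwv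
    refine absurd (hmin _ ?_) (l0_lt_l0_of_support_ssubset ht).not_ge
    simp [mulVec_add, mulVec_smul, mulVec_sub, hw, hs]
  · obtain ⟨j, hwj, hvj⟩ := Set.not_subset.1 hwv
    exact hcw ▸ dotProduct_lt_sum_abs hc (hoff j (Function.notMem_support.1 hvj)) hwj
end

section
/- Let A be an m×n real matrix, y ∈ ℝᵐ, and suppose x ∈ ℝⁿ minimizes ||y − Ax'||₀ over all x' ∈ ℝⁿ. Let v = y − Ax, let S = supp(v) ⊆ {1,…,m}, let A₀ = A(S,:) be the rows of A indexed by S and A₁ = A(Sᶜ,:) the remaining rows, and let v₀ be the restriction of v to S. If there exists a vector u with ||u||_∞ < 1 and A₁ᵀu = −A₀ᵀ sgn(v₀), then for every x' ∈ ℝⁿ with Ax' ≠ Ax one has ||y − Ax||₁ < ||y − Ax'||₁. -/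
open Matrix
open scoped Classical

/-!
Let `v = y - A x` and `w = A (x' - x) ≠ 0`. The vector `c` equal to `sgn v` on the support of `v`
and to `u` off it is a dual certificate: `Aᵀ c = 0`, `‖c‖_∞ ≤ 1` and `⟨c, v⟩ = ‖v‖₁`, hence
`‖v - w‖₁ ≥ ⟨c, v - w⟩ = ‖v‖₁`. The inequality is strict because `w` cannot vanish off the
support of `v`: otherwise a suitable `v - t w = y - A (x + t (x' - x))` would have strictly
smaller support, contradicting the `ℓ₀`-minimality of `x`.
-/

section L0

variable {m : ℕ}

theorem l0_sub_smul_lt {v w : Fin m → ℝ} (hvw : ∀ i, v i = 0 → w i = 0) {i₀ : Fin m}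
    (hi₀ : w i₀ ≠ 0) : l0 (v - (v i₀ / w i₀) • w) < l0 v := by
  have hvi₀ : v i₀ ≠ 0 := fun h => hi₀ (hvw i₀ h)
  refine Finset.card_lt_card (Finset.ssubset_iff_of_subset ?_ |>.mpr ⟨i₀, ?_, ?_⟩)
  · intro i
    simp only [Finset.mem_filter, Finset.mem_univ, true_and, Pi.sub_apply, Pi.smul_apply,
      smul_eq_mul]
    intro hi hvi
    simp [hvi, hvw i hvi] at hi
  · simpa using hvi₀
  · simp [div_mul_cancel₀ _ hi₀]

theorem exists_eq_zero_mulVec_ne_zero_of_l0_le {n : ℕ} (A : Matrix (Fin m) (Fin n) ℝ)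
    {v : Fin m → ℝ} (hmin : ∀ z, l0 v ≤ l0 (v - A *ᵥ z)) {z : Fin n → ℝ} (hz : A *ᵥ z ≠ 0) :
    ∃ i, v i = 0 ∧ (A *ᵥ z) i ≠ 0 := by
  by_contra! hvz
  obtain ⟨i₀, hi₀⟩ := Function.ne_iff.mp hz
  have := hmin ((v i₀ / (A *ᵥ z) i₀) • z)
  rw [mulVec_smul] at this
  exact (l0_sub_smul_lt hvz hi₀).not_ge this

end L0

theorem Real.abs_sign_le_one_s16 (r : ℝ) : |Real.sign r| ≤ 1 := by
  rcases Real.sign_apply_eq r with h | h | h <;> simp [h]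

theorem Real.sign_mul_self_eq_abs_s16 (r : ℝ) : Real.sign r * r = |r| := by
  rcases lt_trichotomy r 0 with h | rfl | h
  · rw [Real.sign_of_neg h, abs_of_neg h, neg_one_mul]
  · simp
  · rw [Real.sign_of_pos h, abs_of_pos h, one_mul]

section L1

variable {ι : Type*} [Fintype ι]

theorem dotProduct_lt_sum_abs_s16 {c z : ι → ℝ} (hc : ∀ i, |c i| ≤ 1) {i₀ : ι} (hc₀ : |c i₀| < 1)
    (hz₀ : z i₀ ≠ 0) : c ⬝ᵥ z < ∑ i, |z i| := by
  refine Finset.sum_lt_sum (fun i _ => ?_) ⟨i₀, Finset.mem_univ _, ?_⟩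
  · calc c i * z i ≤ |c i| * |z i| := abs_mul (c i) (z i) ▸ le_abs_self _
      _ ≤ |z i| := mul_le_of_le_one_left (abs_nonneg _) (hc i)
  · calc c i₀ * z i₀ ≤ |c i₀| * |z i₀| := abs_mul (c i₀) (z i₀) ▸ le_abs_self _
      _ < |z i₀| := mul_lt_of_lt_one_left (abs_pos.mpr hz₀) hc₀

theorem sum_abs_lt_sum_abs_sub {c v w : ι → ℝ} (hc : ∀ i, |c i| ≤ 1)
    (hcv : c ⬝ᵥ v = ∑ i, |v i|) (hcw : c ⬝ᵥ w = 0) {i₀ : ι} (hc₀ : |c i₀| < 1)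
    (hvw₀ : v i₀ ≠ w i₀) : ∑ i, |v i| < ∑ i, |v i - w i| :=
  calc ∑ i, |v i| = c ⬝ᵥ (v - w) := by rw [dotProduct_sub, hcv, hcw, sub_zero]
    _ < ∑ i, |(v - w) i| := dotProduct_lt_sum_abs_s16 hc hc₀ (sub_ne_zero.mpr hvw₀)

end L1

section DualCertificate

variable {ι : Type*}

noncomputable def dualCertificate (v : ι → ℝ) (u : {i // v i = 0} → ℝ) : ι → ℝ :=
  fun i => if h : v i = 0 then u ⟨i, h⟩ else Real.sign (v i)

variable {v : ι → ℝ} {u : {i // v i = 0} → ℝ}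

theorem dualCertificate_of_eq_zero {i : ι} (h : v i = 0) : dualCertificate v u i = u ⟨i, h⟩ :=
  dif_pos h

theorem dualCertificate_of_ne_zero {i : ι} (h : v i ≠ 0) :
    dualCertificate v u i = Real.sign (v i) :=
  dif_neg h

theorem abs_dualCertificate_le (hu : ∀ i, |u i| ≤ 1) (i : ι) : |dualCertificate v u i| ≤ 1 := by
  by_cases h : v i = 0
  · rw [dualCertificate_of_eq_zero h]; exact hu _
  · rw [dualCertificate_of_ne_zero h]; exact Real.abs_sign_le_one_s16 _

variable [Fintype ι]

theorem dualCertificate_dotProduct_self : dualCertificate v u ⬝ᵥ v = ∑ i, |v i| := by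
  refine Finset.sum_congr rfl fun i _ => ?_
  by_cases h : v i = 0
  · simp [h]
  · rw [dualCertificate_of_ne_zero h, Real.sign_mul_self_eq_abs_s16]

theorem dualCertificate_vecMul_eq_zero {n : Type*} {A : Matrix ι n ℝ}
    (heq : ∀ j, ∑ i : {i // v i = 0}, A i j * u i =
      - ∑ i : {i // v i ≠ 0}, A i j * Real.sign (v i)) :
    dualCertificate v u ᵥ* A = 0 := by
  funext j
  have h₀ : ∑ i : {i // v i = 0}, dualCertificate v u i * A i j =
      ∑ i : {i // v i = 0}, A i j * u i :=
    Finset.sum_congr rfl fun i _ => by rw [dualCertificate_of_eq_zero i.2, mul_comm]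
  have h₁ : ∑ i : {i // v i ≠ 0}, dualCertificate v u i * A i j =
      ∑ i : {i // v i ≠ 0}, A i j * Real.sign (v i) :=
    Finset.sum_congr rfl fun i _ => by rw [dualCertificate_of_ne_zero i.2, mul_comm]
  rw [vecMul, dotProduct, ← Fintype.sum_subtype_add_sum_subtype (fun i => v i = 0), h₀, h₁,
    heq j, neg_add_cancel, Pi.zero_apply]

end DualCertificate

/-- Suppose `x` minimizes `‖y - A x'‖₀`, let `v = y - A x` with support `S`,
and split the rows of `A` into `A₀ = A(S,:)` and `A₁ = A(Sᶜ,:)`. If there is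
a vector `u` with `‖u‖_∞ < 1` and `A₁ᵀ u = -A₀ᵀ sgn(v₀)`, then `Ax` is the
unique `ℓ₁`-minimizer: `‖y - A x‖₁ < ‖y - A x'‖₁` whenever `A x' ≠ A x`. -/
theorem min_unsatisfy_l1_recovery (m n : ℕ) (A : Matrix (Fin m) (Fin n) ℝ)
    (y : Fin m → ℝ) (x : Fin n → ℝ)
    (hmin : ∀ x' : Fin n → ℝ, l0 (y - A.mulVec x) ≤ l0 (y - A.mulVec x'))
    (v : Fin m → ℝ) (hv : v = y - A.mulVec x)
    (u : {i : Fin m // v i = 0} → ℝ) (hu : ∀ i, |u i| < 1)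
    (heq : ∀ j : Fin n,
      ∑ i : {i : Fin m // v i = 0}, A i j * u i =
        - ∑ i : {i : Fin m // v i ≠ 0}, A i j * Real.sign (v i)) :
    ∀ x' : Fin n → ℝ, A.mulVec x' ≠ A.mulVec x →
      ∑ i, |(y - A.mulVec x) i| < ∑ i, |(y - A.mulVec x') i| := by
  intro x' hx'
  have hvmin : ∀ z, l0 v ≤ l0 (v - A *ᵥ z) := fun z => by
    simpa [hv, mulVec_add, sub_sub] using hmin (x + z)
  have hw : A *ᵥ (x' - x) ≠ 0 := by rwa [mulVec_sub, sub_ne_zero]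
  obtain ⟨i₀, hvi₀, hwi₀⟩ := exists_eq_zero_mulVec_ne_zero_of_l0_le A hvmin hw
  have hcw : dualCertificate v u ⬝ᵥ A *ᵥ (x' - x) = 0 := by
    rw [dotProduct_mulVec, dualCertificate_vecMul_eq_zero heq, zero_dotProduct]
  have key := sum_abs_lt_sum_abs_sub (abs_dualCertificate_le (fun i => (hu i).le))
    dualCertificate_dotProduct_self hcw
    (by rw [dualCertificate_of_eq_zero hvi₀]; exact hu _) (hvi₀.trans_ne hwi₀.symm)
  simpa [hv, mulVec_sub, sub_sub_eq_add_sub, sub_add_cancel] using key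
end

section
/- Let A be an m×n real matrix, y ∈ ℝᵐ, and suppose x ∈ ℝⁿ minimizes ||y − Ax'||₀ over all x' ∈ ℝⁿ. Let v = y − Ax, let S = supp(v), let A₀ = A(S,:) be the rows of A indexed by S and A₁ = A(Sᶜ,:) the remaining rows, and let v₀ be the restriction of v to S. Suppose that: (i) the rows of A₁ are linearly independent (equivalently A₁A₁ᵀ is invertible); (ii) the row span of A₀ is contained in the row span of A₁; and (iii) the matrix M = (A₁A₁ᵀ)⁻¹A₁A₀ᵀ (that is, (A₁ᵀ)⁺A₀ᵀ, where (A₁ᵀ)⁺ denotes the pseudoinverse of A₁ᵀ) satisfies ||M||_{∞→∞} < 1, where ||M||_{∞→∞} is the maximum over rows of M of the sum of absolute values of the entries in that row. Then for every x' ∈ ℝⁿ with Ax' ≠ Ax one has ||y − Ax||₁ < ||y − Ax'||₁. -/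
/-!
Let `w = A (x' - x)`, so that `y - A x' = v - w`. The row-span inclusion gives `A₀ = C A₁`, and
then `M = Cᵀ`, so the entries of `w` on `S` are `w_S = w_{Sᶜ} M`. The row-sum bound on `M` makes
this a strict `ℓ¹` contraction, `‖w_S‖₁ < ‖w_{Sᶜ}‖₁` (note `w_{Sᶜ} ≠ 0`, as otherwise `w = 0`).
This null-space property on the support of `v` gives `‖v‖₁ < ‖v - w‖₁` by the triangle
inequality on `S`.
-/

open Matrix
open scoped Classical

theorem Matrix.exists_eq_mul_of_span_range_le {R m n k : Type*} [CommRing R] [Fintype m]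
    {A : Matrix m n R} {B : Matrix k n R}
    (h : Submodule.span R (Set.range B) ≤ Submodule.span R (Set.range A)) :
    ∃ C : Matrix k m R, B = C * A := by
  have hrow (s : k) : ∃ c : m → R, c ᵥ* A = B s :=
    (range_vecMulLinear A).ge (h (Submodule.subset_span ⟨s, rfl⟩))
  choose C hC using hrow
  exact ⟨C, funext fun s => (hC s).symm⟩

theorem Matrix.inv_mul_mul_transpose_of_eq_mul {R m n k : Type*} [CommRing R] [Fintype m]
    [DecidableEq m] [Fintype n] {A : Matrix m n R} {B : Matrix k n R} {C : Matrix k m R}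
    (hB : B = C * A) (hA : IsUnit (A * Aᵀ).det) : (A * Aᵀ)⁻¹ * A * Bᵀ = Cᵀ := by
  rw [hB, transpose_mul, ← Matrix.mul_assoc, Matrix.mul_assoc _ A, nonsing_inv_mul _ hA,
    Matrix.one_mul]

theorem Matrix.sum_abs_vecMul_lt_sum_abs {κ ι : Type*} [Fintype κ] [Fintype ι]
    {M : Matrix κ ι ℝ} (hM : ∀ r, ∑ s, |M r s| < 1) {a : κ → ℝ} (ha : a ≠ 0) :
    ∑ s, |(a ᵥ* M) s| < ∑ r, |a r| := by
  obtain ⟨r₀, hr₀⟩ := Function.ne_iff.mp ha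
  calc ∑ s, |(a ᵥ* M) s| ≤ ∑ s, ∑ r, |a r| * |M r s| := by
        refine Finset.sum_le_sum fun s _ => ?_
        exact (Finset.abs_sum_le_sum_abs _ _).trans_eq (by simp only [abs_mul])
    _ = ∑ r, |a r| * ∑ s, |M r s| := by rw [Finset.sum_comm]; simp only [Finset.mul_sum]
    _ < ∑ r, |a r| :=
        Finset.sum_lt_sum (fun r _ => mul_le_of_le_one_right (abs_nonneg _) (hM r).le)
          ⟨r₀, Finset.mem_univ _, mul_lt_of_lt_one_right (abs_pos.mpr hr₀) (hM r₀)⟩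

theorem sum_abs_lt_sum_abs_sub_s19 {ι : Type*} [Fintype ι] {v w : ι → ℝ}
    (h : ∑ s : {i // v i ≠ 0}, |w s| < ∑ r : {i // v i = 0}, |w r|) :
    ∑ i, |v i| < ∑ i, |v i - w i| := by
  rw [← Fintype.sum_subtype_add_sum_subtype (fun i => v i = 0),
    ← Fintype.sum_subtype_add_sum_subtype (fun i => v i = 0)]
  have hv : ∑ r : {i // v i = 0}, |v r| = 0 :=
    Finset.sum_eq_zero fun r _ => by rw [r.prop, abs_zero]
  have hvw : ∑ r : {i // v i = 0}, |v r - w r| = ∑ r : {i // v i = 0}, |w r| :=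
    Finset.sum_congr rfl fun r _ => by rw [r.prop, zero_sub, abs_neg]
  have hsupp : ∑ s : {i // v i ≠ 0}, |v s| - ∑ s : {i // v i ≠ 0}, |w s| ≤
      ∑ s : {i // v i ≠ 0}, |v s - w s| := by
    rw [← Finset.sum_sub_distrib]
    exact Finset.sum_le_sum fun s _ => abs_sub_abs_le_abs_sub _ _
  linarith

theorem min_unsatisfy_l1_pseudoinverse_condition_general (m n : ℕ)
    (A : Matrix (Fin m) (Fin n) ℝ) (y : Fin m → ℝ) (x : Fin n → ℝ)
    (v : Fin m → ℝ) (hv : v = y - A.mulVec x)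
    (A₀ : Matrix {i : Fin m // v i ≠ 0} (Fin n) ℝ)
    (hA₀ : A₀ = A.submatrix (Subtype.val : {i : Fin m // v i ≠ 0} → Fin m) id)
    (A₁ : Matrix {i : Fin m // v i = 0} (Fin n) ℝ)
    (hA₁ : A₁ = A.submatrix (Subtype.val : {i : Fin m // v i = 0} → Fin m) id)
    (hinv : IsUnit (A₁ * A₁ᵀ).det)
    (hrowspan : Submodule.span ℝ
        (Set.range fun i : {i : Fin m // v i ≠ 0} => fun j => A₀ i j) ≤
      Submodule.span ℝ
        (Set.range fun i : {i : Fin m // v i = 0} => fun j => A₁ i j))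
    (M : Matrix {i : Fin m // v i = 0} {i : Fin m // v i ≠ 0} ℝ)
    (hM : M = (A₁ * A₁ᵀ)⁻¹ * A₁ * A₀ᵀ)
    (hnorm : ∀ r : {i : Fin m // v i = 0}, ∑ s : {i : Fin m // v i ≠ 0}, |M r s| < 1) :
    ∀ x' : Fin n → ℝ, A.mulVec x' ≠ A.mulVec x →
      ∑ i, |(y - A.mulVec x) i| < ∑ i, |(y - A.mulVec x') i| := by
  intro x' hx'
  obtain ⟨C, hC⟩ := exists_eq_mul_of_span_range_le (A := A₁) (B := A₀) hrowspan
  have hMC : M = Cᵀ := by rw [hM, inv_mul_mul_transpose_of_eq_mul hC hinv]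
  set w := A *ᵥ (x' - x) with hw_def
  have hres : y - A *ᵥ x' = v - w := by rw [hv, hw_def, mulVec_sub]; abel
  rw [← hv, hres]
  apply sum_abs_lt_sum_abs_sub_s19
  have hwS : (fun s : {i // v i ≠ 0} => w s) = (fun r : {i // v i = 0} => w r) ᵥ* M := by
    have hA₁w : A₁ *ᵥ (x' - x) = fun r : {i // v i = 0} => w r := by rw [hA₁]; rfl
    rw [hMC, vecMul_transpose, ← hA₁w, mulVec_mulVec, ← hC, hA₀]
    rfl
  have hw_ne : (fun r : {i // v i = 0} => w r) ≠ 0 := by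
    intro h0
    apply hx'
    rw [← sub_eq_zero, ← mulVec_sub]
    funext i
    by_cases hi : v i = 0
    · exact congrFun h0 ⟨i, hi⟩
    · simpa [h0] using congrFun hwS ⟨i, hi⟩
  simpa only [← hwS] using sum_abs_vecMul_lt_sum_abs hnorm hw_ne

/-- Suppose `x` minimizes `‖y - A x'‖₀`, let `v = y - A x` with support `S`,
and split the rows of `A` into `A₀ = A(S,:)` and `A₁ = A(Sᶜ,:)`.  If the rows
of `A₁` are linearly independent (equivalently `A₁ A₁ᵀ` is invertible), the
row span of `A₀` is contained in the row span of `A₁`, and the matrix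
`M = (A₁ A₁ᵀ)⁻¹ A₁ A₀ᵀ = (A₁ᵀ)⁺ A₀ᵀ` has `‖M‖_{∞→∞} < 1` (every row of `M`
has absolute row sum `< 1`), then `‖y - A x‖₁ < ‖y - A x'‖₁` for every `x'`
with `A x' ≠ A x`. -/
theorem min_unsatisfy_l1_pseudoinverse_condition (m n : ℕ)
    (A : Matrix (Fin m) (Fin n) ℝ) (y : Fin m → ℝ) (x : Fin n → ℝ)
    (hmin : ∀ x' : Fin n → ℝ, l0 (y - A.mulVec x) ≤ l0 (y - A.mulVec x'))
    (v : Fin m → ℝ) (hv : v = y - A.mulVec x)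
    (A₀ : Matrix {i : Fin m // v i ≠ 0} (Fin n) ℝ)
    (hA₀ : A₀ = A.submatrix (Subtype.val : {i : Fin m // v i ≠ 0} → Fin m) id)
    (A₁ : Matrix {i : Fin m // v i = 0} (Fin n) ℝ)
    (hA₁ : A₁ = A.submatrix (Subtype.val : {i : Fin m // v i = 0} → Fin m) id)
    (hindep : LinearIndependent ℝ (fun i : {i : Fin m // v i = 0} => fun j => A₁ i j))
    (hinv : IsUnit (A₁ * A₁ᵀ).det)
    (hrowspan : Submodule.span ℝ
        (Set.range fun i : {i : Fin m // v i ≠ 0} => fun j => A₀ i j) ≤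
      Submodule.span ℝ
        (Set.range fun i : {i : Fin m // v i = 0} => fun j => A₁ i j))
    (M : Matrix {i : Fin m // v i = 0} {i : Fin m // v i ≠ 0} ℝ)
    (hM : M = (A₁ * A₁ᵀ)⁻¹ * A₁ * A₀ᵀ)
    (hnorm : ∀ r : {i : Fin m // v i = 0}, ∑ s : {i : Fin m // v i ≠ 0}, |M r s| < 1) :
    ∀ x' : Fin n → ℝ, A.mulVec x' ≠ A.mulVec x →
      ∑ i, |(y - A.mulVec x) i| < ∑ i, |(y - A.mulVec x') i| :=
  min_unsatisfy_l1_pseudoinverse_condition_general m n A y x v hv A₀ hA₀ A₁ hA₁ hinv hrowspan M hM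
    hnorm
end
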